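/- arXiv:1507.07051 — 4 statements merged into one kernel-verified Lean document; each statement's English description precedes it below -/
import Mathlib

section
/- Let X take at most m values with p_i = P(X = i) and cumulative probabilities p̄_i = Σ_{j=1}^i p_j. Let φ(i) ≥ 0 be weights and 0 < β ≤ 1 satisfy Σ_{i=1}^m φ(i)[p̄_i − β i] ≥ 0. Then −Σ_{i=1}^m φ(i) p̄_i log p̄_i ≤ −(log β) Σ_{i=1}^m φ(i) p̄_i − Σ_{i=1}^m φ(i) p̄_i log i, with equality if and only if φ(i)[p̄_i − β i] = 0 for all i = 1,…,m. -/
open Finset Real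

/-! Writing `y i = β i`, the claim is the weighted Gibbs-type inequality
`∑ φ x log y ≤ ∑ φ x log x` for `x = p̄`. Termwise, `log t ≤ t - 1` at `t = y / x` gives
`x log y - x log x ≤ y - x`, with equality only when `x = y`; summing with the weights `φ`, the
right-hand side becomes `-∑ φ (p̄ - β i) ≤ 0`. Equality forces every termwise inequality to be
tight, and `log (β i) = log β + log i` splits the left-hand side as in the statement. -/

namespace Real

theorem mul_log_sub_mul_log_le {x y : ℝ} (hx : 0 ≤ x) (hy : 0 < y) :
    x * log y - x * log x ≤ y - x := by
  rcases hx.eq_or_lt with rfl | hx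
  · simpa using hy.le
  have h := log_le_sub_one_of_pos (div_pos hy hx)
  rw [log_div hy.ne' hx.ne'] at h
  have := mul_le_mul_of_nonneg_left h hx.le
  rwa [mul_sub, mul_sub, mul_div_cancel₀ _ hx.ne', mul_one] at this

theorem mul_log_sub_mul_log_eq_iff {x y : ℝ} (hx : 0 ≤ x) (hy : 0 < y) :
    x * log y - x * log x = y - x ↔ x = y := by
  refine ⟨fun h => ?_, fun h => by rw [h]; ring⟩
  rcases hx.eq_or_lt with rfl | hx
  · simpa [eq_comm] using h
  by_contra hxy
  have h' := log_lt_sub_one_of_pos (div_pos hy hx)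
    (by rwa [ne_eq, div_eq_one_iff_eq hx.ne', eq_comm])
  rw [log_div hy.ne' hx.ne'] at h'
  have := mul_lt_mul_of_pos_left h' hx
  rw [mul_sub, mul_sub, mul_div_cancel₀ _ hx.ne', mul_one] at this
  linarith

theorem sum_mul_mul_log_le_and_eq_iff {ι : Type*} (s : Finset ι) {w x y : ι → ℝ}
    (hw : ∀ i ∈ s, 0 ≤ w i) (hx : ∀ i ∈ s, 0 ≤ x i) (hy : ∀ i ∈ s, 0 < y i)
    (hxy : 0 ≤ ∑ i ∈ s, w i * (x i - y i)) :
    ∑ i ∈ s, w i * x i * log (y i) ≤ ∑ i ∈ s, w i * x i * log (x i) ∧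
      (∑ i ∈ s, w i * x i * log (y i) = ∑ i ∈ s, w i * x i * log (x i) ↔
        ∀ i ∈ s, w i * (x i - y i) = 0) := by
  set slack : ι → ℝ := fun i =>
    w i * (y i - x i) - (w i * x i * log (y i) - w i * x i * log (x i))
  have hslack : ∀ i ∈ s, 0 ≤ slack i := fun i hi => by
    have := mul_le_mul_of_nonneg_left (mul_log_sub_mul_log_le (hx i hi) (hy i hi)) (hw i hi)
    simp only [slack]
    linarith
  have hslack_eq : ∀ i ∈ s, slack i = 0 ↔ w i * (x i - y i) = 0 := fun i hi => by
    rcases (hw i hi).eq_or_lt with hw0 | hwpos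
    · simp [slack, ← hw0]
    have hfactor : slack i = w i * ((y i - x i) - (x i * log (y i) - x i * log (x i))) := by
      simp only [slack]; ring
    rw [hfactor, mul_eq_zero, mul_eq_zero, or_iff_right hwpos.ne', or_iff_right hwpos.ne',
      sub_eq_zero, eq_comm, mul_log_sub_mul_log_eq_iff (hx i hi) (hy i hi), sub_eq_zero]
  have hsum : ∑ i ∈ s, slack i
      = -∑ i ∈ s, w i * (x i - y i)
        - (∑ i ∈ s, w i * x i * log (y i) - ∑ i ∈ s, w i * x i * log (x i)) := by
    simp only [slack, sum_sub_distrib, ← sum_neg_distrib]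
    congr 1
    exact sum_congr rfl fun i _ => by ring
  have hslack_sum := sum_nonneg hslack
  refine ⟨by linarith, fun h => ?_, fun h => ?_⟩
  · have : ∑ i ∈ s, slack i = 0 := by linarith
    exact fun i hi => (hslack_eq i hi).1 ((sum_eq_zero_iff_of_nonneg hslack).1 this i hi)
  · have hzero : ∑ i ∈ s, slack i = 0 := sum_eq_zero fun i hi => (hslack_eq i hi).2 (h i hi)
    have : ∑ i ∈ s, w i * (x i - y i) = 0 := sum_eq_zero h
    linarith

end Real

theorem discrete_wcre_uniform_bound_general
    (m : ℕ) (p : ℕ → ℝ) (hp : ∀ i ∈ Icc 1 m, 0 ≤ p i)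
    (pbar : ℕ → ℝ) (hpbar : ∀ i, pbar i = ∑ j ∈ Icc 1 i, p j)
    (φ : ℕ → ℝ) (hφ : ∀ i, 0 ≤ φ i)
    (β : ℝ) (hβ0 : 0 < β)
    (hcond : 0 ≤ ∑ i ∈ Icc 1 m, φ i * (pbar i - β * i)) :
    (-∑ i ∈ Icc 1 m, φ i * pbar i * Real.log (pbar i)
        ≤ -Real.log β * ∑ i ∈ Icc 1 m, φ i * pbar i
          - ∑ i ∈ Icc 1 m, φ i * pbar i * Real.log i) ∧
    ((-∑ i ∈ Icc 1 m, φ i * pbar i * Real.log (pbar i)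
        = -Real.log β * ∑ i ∈ Icc 1 m, φ i * pbar i
          - ∑ i ∈ Icc 1 m, φ i * pbar i * Real.log i) ↔
      ∀ i ∈ Icc 1 m, φ i * (pbar i - β * i) = 0) := by
  have hpbar_nonneg : ∀ i ∈ Icc 1 m, 0 ≤ pbar i := fun i hi => by
    rw [hpbar]
    exact sum_nonneg fun j hj => hp j (Icc_subset_Icc_right (mem_Icc.1 hi).2 hj)
  have hi_pos : ∀ i ∈ Icc 1 m, (0 : ℝ) < i := fun i hi => by
    exact_mod_cast (mem_Icc.1 hi).1
  have hsplit : ∑ i ∈ Icc 1 m, φ i * pbar i * log (β * i)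
      = log β * ∑ i ∈ Icc 1 m, φ i * pbar i + ∑ i ∈ Icc 1 m, φ i * pbar i * log i := by
    rw [mul_sum, ← sum_add_distrib]
    exact sum_congr rfl fun i hi => by rw [log_mul hβ0.ne' (hi_pos i hi).ne']; ring
  obtain ⟨hle, heq⟩ := sum_mul_mul_log_le_and_eq_iff (Icc 1 m) (fun i _ => hφ i) hpbar_nonneg
    (fun i hi => mul_pos hβ0 (hi_pos i hi)) hcond
  rw [hsplit] at hle heq
  exact ⟨by linarith, by rw [← heq]; constructor <;> intro h <;> linarith⟩

theorem discrete_wcre_uniform_bound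
    (m : ℕ) (p : ℕ → ℝ) (hp : ∀ i ∈ Icc 1 m, 0 ≤ p i)
    (hsum : ∑ i ∈ Icc 1 m, p i = 1)
    (pbar : ℕ → ℝ) (hpbar : ∀ i, pbar i = ∑ j ∈ Icc 1 i, p j)
    (φ : ℕ → ℝ) (hφ : ∀ i, 0 ≤ φ i)
    (β : ℝ) (hβ0 : 0 < β) (hβ1 : β ≤ 1)
    (hcond : 0 ≤ ∑ i ∈ Icc 1 m, φ i * (pbar i - β * i)) :
    (-∑ i ∈ Icc 1 m, φ i * pbar i * Real.log (pbar i)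
        ≤ -Real.log β * ∑ i ∈ Icc 1 m, φ i * pbar i
          - ∑ i ∈ Icc 1 m, φ i * pbar i * Real.log i) ∧
    ((-∑ i ∈ Icc 1 m, φ i * pbar i * Real.log (pbar i)
        = -Real.log β * ∑ i ∈ Icc 1 m, φ i * pbar i
          - ∑ i ∈ Icc 1 m, φ i * pbar i * Real.log i) ↔
      ∀ i ∈ Icc 1 m, φ i * (pbar i - β * i) = 0) :=
  discrete_wcre_uniform_bound_general m p hp pbar hpbar φ hφ β hβ0 hcond
end

section
/- Let X = (X₁,…,Xₙ) be a random vector with nonnegative components. Suppose φ : ℝ₊ⁿ → ℝ₊ satisfies ∫_{(0,a)ⁿ} φ(x) dx < ∞ and ∫_{ℝ₊ⁿ \ (0,a)ⁿ} φ(x) ∏ᵢ xᵢ^{−pα/n} dx < ∞ for some a > 0, p > 0 and 0 < α < 1, and E[Xᵢᵖ] < ∞ for all i. Then the multivariate WCRE E_φ^w(X) = −∫_{ℝ₊ⁿ} φ(x) P[X > x] log P[X > x] dx is finite. -/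
open MeasureTheory ProbabilityTheory Set

lemma ulogu_le {α : ℝ} (hα : α ∈ Ioo (0:ℝ) 1) {u : ℝ} (h0 : 0 ≤ u) (h1 : u ≤ 1) :
    |u * Real.log u| ≤ (1 - α)⁻¹ * u ^ α := by
  obtain ⟨hα0, hα1⟩ := hα
  have h1α : (0:ℝ) < 1 - α := by linarith
  rcases eq_or_lt_of_le h0 with h | hu
  · simp [← h, Real.zero_rpow hα0.ne']
  · have hlog : Real.log u ≤ 0 := Real.log_nonpos h0 h1
    have habs : |u * Real.log u| = u * (-Real.log u) := by
      rw [abs_of_nonpos (mul_nonpos_of_nonneg_of_nonpos h0 hlog)]; ring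
    rw [habs]
    have hsplit : u = u ^ α * u ^ (1 - α) := by
      rw [← Real.rpow_add hu]; norm_num
    have key : u ^ (1 - α) * (-Real.log u) ≤ (1 - α)⁻¹ := by
      set v := u ^ (1 - α) with hv
      have hv0 : 0 < v := Real.rpow_pos_of_pos hu _
      have hlogv : Real.log v = (1 - α) * Real.log u := Real.log_rpow hu _
      have hvb : v * (-Real.log v) ≤ 1 := by
        have h2 := Real.log_le_sub_one_of_pos (show (0:ℝ) < 1/v by positivity)
        rw [Real.log_div one_ne_zero hv0.ne', Real.log_one] at h2
        have h3 : -Real.log v ≤ 1/v - 1 := by linarith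
        calc v * (-Real.log v) ≤ v * (1/v - 1) :=
              mul_le_mul_of_nonneg_left h3 hv0.le
          _ = 1 - v := by field_simp
          _ ≤ 1 := by linarith
      have heq : v * (-Real.log u) = (v * (-Real.log v)) / (1 - α) := by
        rw [hlogv]; field_simp
      rw [heq, ← one_div]
      gcongr
    calc u * (-Real.log u) = u ^ α * (u ^ (1-α) * (-Real.log u)) := by
          rw [← mul_assoc, ← hsplit]
      _ ≤ u ^ α * (1-α)⁻¹ :=
          mul_le_mul_of_nonneg_left key (Real.rpow_nonneg h0 _)
      _ = (1-α)⁻¹ * u ^ α := mul_comm _ _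

theorem multivariate_wcre_finite
    {Ω : Type*} [MeasureSpace Ω] [IsProbabilityMeasure (ℙ : Measure Ω)]
    (n : ℕ) (hn : 0 < n)
    (X : Ω → (Fin n → ℝ)) (hX : Measurable X) (hXpos : ∀ ω i, 0 ≤ X ω i)
    (φ : (Fin n → ℝ) → ℝ) (hφm : Measurable φ) (hφ : ∀ x, 0 ≤ φ x)
    (S : (Fin n → ℝ) → ℝ)
    (hS : ∀ x, S x = (ℙ {ω | ∀ i, x i < X ω i}).toReal)
    (a p α : ℝ) (ha : 0 < a) (hp : 0 < p) (hα : α ∈ Ioo (0:ℝ) 1)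
    (hbox : IntegrableOn φ {x : Fin n → ℝ | ∀ i, x i ∈ Ioo 0 a})
    (htail : IntegrableOn
      (fun x : Fin n → ℝ => φ x * ∏ i, (x i) ^ (-(p * α) / n))
      ({x : Fin n → ℝ | ∀ i, 0 < x i} \ {x : Fin n → ℝ | ∀ i, x i ∈ Ioo 0 a}))
    (hmom : ∀ i, Integrable (fun ω => (X ω i) ^ p) ℙ) :
    IntegrableOn (fun x : Fin n → ℝ => φ x * S x * Real.log (S x))
      {x : Fin n → ℝ | ∀ i, 0 < x i} := by
  obtain ⟨hα0, hα1⟩ := hα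
  have h1α : (0:ℝ) < 1 - α := by linarith
  set P : Set (Fin n → ℝ) := {x | ∀ i, 0 < x i} with hP
  set B : Set (Fin n → ℝ) := {x | ∀ i, x i ∈ Ioo 0 a} with hB
  have hPmeas : MeasurableSet P := by
    rw [show P = ⋂ i, (fun x : Fin n → ℝ => x i) ⁻¹' Ioi 0 by ext x; simp [hP]]
    exact MeasurableSet.iInter fun i => (measurable_pi_apply i) measurableSet_Ioi
  have hBmeas : MeasurableSet B := by
    rw [show B = ⋂ i, (fun x : Fin n → ℝ => x i) ⁻¹' Ioo 0 a by ext x; simp [hB]]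
    exact MeasurableSet.iInter fun i => (measurable_pi_apply i) measurableSet_Ioo
  -- measurability of S
  have hSm : Measurable S := by
    have hset : MeasurableSet {q : (Fin n → ℝ) × (Fin n → ℝ) | ∀ i, q.1 i < q.2 i} := by
      rw [show {q : (Fin n → ℝ) × (Fin n → ℝ) | ∀ i, q.1 i < q.2 i}
          = ⋂ i, {q : (Fin n → ℝ) × (Fin n → ℝ) | q.1 i < q.2 i} by ext q; simp]
      exact MeasurableSet.iInter fun i =>
        measurableSet_lt (by fun_prop) (by fun_prop)
    have : IsProbabilityMeasure (Measure.map X ℙ) :=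
      Measure.isProbabilityMeasure_map hX.aemeasurable
    have hm := measurable_measure_prodMk_left (ν := Measure.map X ℙ) hset
    have heq : ∀ x, S x = ((Measure.map X ℙ)
        (Prod.mk x ⁻¹' {q : (Fin n → ℝ) × (Fin n → ℝ) | ∀ i, q.1 i < q.2 i})).toReal := by
      intro x
      rw [hS x, Measure.map_apply hX (measurable_prodMk_left hset)]
      rfl
    rw [funext heq]
    exact hm.ennreal_toReal
  have hS0 : ∀ x, 0 ≤ S x := fun x => by rw [hS x]; exact ENNReal.toReal_nonneg
  have hS1 : ∀ x, S x ≤ 1 := fun x => by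
    rw [hS x]
    calc (ℙ {ω | ∀ i, x i < X ω i}).toReal ≤ (1 : ENNReal).toReal :=
          ENNReal.toReal_mono ENNReal.one_ne_top prob_le_one
      _ = 1 := by simp
  have hfm : AEStronglyMeasurable (fun x : Fin n → ℝ => φ x * S x * Real.log (S x))
      (volume : Measure (Fin n → ℝ)) :=
    ((hφm.mul hSm).mul (Real.measurable_log.comp hSm)).aestronglyMeasurable
  have habsφ : ∀ x, ‖φ x * S x * Real.log (S x)‖ = φ x * |S x * Real.log (S x)| := by
    intro x
    rw [Real.norm_eq_abs, mul_assoc, abs_mul, abs_of_nonneg (hφ x)]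
  -- split the domain
  have hPB : P ⊆ B ∪ (P \ B) := fun x hx => by
    by_cases h : x ∈ B
    · exact Or.inl h
    · exact Or.inr ⟨hx, h⟩
  rw [IntegrableOn]
  apply Integrable.mono_measure _ (Measure.restrict_mono hPB le_rfl)
  rw [← IntegrableOn]
  apply IntegrableOn.union
  · -- box part: bound by (1-α)⁻¹ * φ
    apply Integrable.mono' (hbox.const_mul ((1-α)⁻¹)) hfm.restrict
    refine ae_of_all _ fun x => ?_
    rw [habsφ x]
    calc φ x * |S x * Real.log (S x)| ≤ φ x * ((1-α)⁻¹ * (S x) ^ α) :=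
          mul_le_mul_of_nonneg_left (ulogu_le ⟨hα0, hα1⟩ (hS0 x) (hS1 x)) (hφ x)
      _ ≤ φ x * ((1-α)⁻¹ * 1) :=
          mul_le_mul_of_nonneg_left (mul_le_mul_of_nonneg_left
            (Real.rpow_le_one (hS0 x) (hS1 x) hα0.le) (by positivity)) (hφ x)
      _ = (1-α)⁻¹ * φ x := by ring
  · -- tail part
    set M : Fin n → ℝ := fun i => ∫ ω, (X ω i) ^ p with hM
    have hM0 : ∀ i, 0 ≤ M i := fun i =>
      integral_nonneg fun ω => Real.rpow_nonneg (hXpos ω i) p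
    set C : ℝ := (1-α)⁻¹ * ∏ i, (M i) ^ (α / n) with hC
    apply Integrable.mono' (htail.const_mul C) hfm.restrict
    refine (ae_restrict_iff' (hPmeas.diff hBmeas)).2 (ae_of_all _ fun x hx => ?_)
    obtain ⟨hxP, _⟩ := hx
    have hxpos : ∀ i, 0 < x i := hxP
    -- per-coordinate Markov bound : S x ≤ M i / (x i)^p
    have hMarkov : ∀ i, S x ≤ M i / (x i) ^ p := by
      intro i
      have hxp : (0:ℝ) < (x i) ^ p := Real.rpow_pos_of_pos (hxpos i) p
      have hsub : {ω | ∀ j, x j < X ω j} ⊆ {ω | (x i) ^ p ≤ (X ω i) ^ p} := by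
        intro ω hω
        exact Real.rpow_le_rpow (hxpos i).le (hω i).le hp.le
      have hQ : S x ≤ (ℙ {ω | (x i) ^ p ≤ (X ω i) ^ p}).toReal := by
        rw [hS x]
        exact ENNReal.toReal_mono (measure_ne_top _ _) (measure_mono hsub)
      have hmk := mul_meas_ge_le_integral_of_nonneg
        (ae_of_all ℙ fun ω => Real.rpow_nonneg (hXpos ω i) p) (hmom i) ((x i) ^ p)
      rw [le_div_iff₀ hxp]
      calc S x * (x i) ^ p ≤ (ℙ {ω | (x i) ^ p ≤ (X ω i) ^ p}).toReal * (x i) ^ p := by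
            gcongr
        _ = (x i) ^ p * (ℙ {ω | (x i) ^ p ≤ (X ω i) ^ p}).toReal := mul_comm _ _
        _ ≤ M i := hmk
    -- (S x)^α ≤ ∏ (M i)^(α/n) * ∏ (x i)^(-(pα)/n)
    have hprod : (S x) ^ α ≤ (∏ i, (M i) ^ (α / n)) * ∏ i, (x i) ^ (-(p * α) / n) := by
      have hn' : (n:ℝ) ≠ 0 := Nat.cast_ne_zero.mpr hn.ne'
      have hSprod : (S x) ^ α = ∏ _i : Fin n, (S x) ^ (α / n) := by
        rw [Finset.prod_const, Finset.card_univ, Fintype.card_fin,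
          ← Real.rpow_natCast ((S x) ^ (α / n)) n, ← Real.rpow_mul (hS0 x)]
        congr 1
        field_simp
      rw [hSprod]
      have hstep : ∀ i : Fin n, (S x) ^ (α / n) ≤ (M i) ^ (α / n) * (x i) ^ (-(p * α) / n) := by
        intro i
        have h1 : (S x) ^ (α / n) ≤ (M i / (x i) ^ p) ^ (α / n) :=
          Real.rpow_le_rpow (hS0 x) (hMarkov i) (by positivity)
        have h2 : (M i / (x i) ^ p) ^ (α / n)
            = (M i) ^ (α / n) * (x i) ^ (-(p * α) / n) := by
          rw [Real.div_rpow (hM0 i) (Real.rpow_nonneg (hxpos i).le p),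
            ← Real.rpow_mul (hxpos i).le, div_eq_mul_inv, ← Real.rpow_neg (hxpos i).le]
          congr 1
          field_simp
        rw [← h2]; exact h1
      calc ∏ _i : Fin n, (S x) ^ (α / n)
          ≤ ∏ i, (M i) ^ (α / n) * (x i) ^ (-(p * α) / n) :=
            Finset.prod_le_prod (fun i _ => Real.rpow_nonneg (hS0 x) _)
              (fun i _ => hstep i)
        _ = (∏ i, (M i) ^ (α / n)) * ∏ i, (x i) ^ (-(p * α) / n) :=
            Finset.prod_mul_distrib
    rw [habsφ x]
    have hprodx0 : 0 ≤ ∏ i, (x i) ^ (-(p * α) / n) :=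
      Finset.prod_nonneg fun i _ => Real.rpow_nonneg (hxpos i).le _
    have hprodM0 : 0 ≤ ∏ i, (M i) ^ (α / n) :=
      Finset.prod_nonneg fun i _ => Real.rpow_nonneg (hM0 i) _
    calc φ x * |S x * Real.log (S x)|
        ≤ φ x * ((1-α)⁻¹ * (S x) ^ α) :=
          mul_le_mul_of_nonneg_left (ulogu_le ⟨hα0, hα1⟩ (hS0 x) (hS1 x)) (hφ x)
      _ ≤ φ x * ((1-α)⁻¹ * ((∏ i, (M i) ^ (α / n)) * ∏ i, (x i) ^ (-(p * α) / n))) :=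
          mul_le_mul_of_nonneg_left (mul_le_mul_of_nonneg_left hprod (by positivity)) (hφ x)
      _ = C * (φ x * ∏ i, (x i) ^ (-(p * α) / n)) := by rw [hC]; ring
end

section
/- Let X and Y be nonnegative independent random variables, Y with PDF f_Y, and let φ : ℝ₊ → ℝ₊ be a weight function. Define ψ_Y(x) = ∫ f_Y(y) φ(x+y) dy. Then E_{ψ_Y}^w(X) ≤ E_φ^w(X + Y), i.e., the weighted cumulative residual entropy of a sum of independent nonnegative random variables dominates the reweighted WCRE of each summand. In particular max{E_{ψ_Y}^w(X), E_{ψ_X}^w(Y)} ≤ E_φ^w(X+Y). -/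
open MeasureTheory ProbabilityTheory Set
open scoped ENNReal

/-- Weighted cumulative residual entropy of a random variable with survival function `S`
and weight `φ`. -/
noncomputable def wcre (φ S : ℝ → ℝ) : ℝ :=
  -∫ x in Ioi (0:ℝ), φ x * S x * Real.log (S x)

/-- For `u ∈ [0,1]`, `-(u * log u) ≤ 1`. -/
lemma wcre_mul_log_bound {u : ℝ} (h0 : 0 ≤ u) (h1 : u ≤ 1) : -(u * Real.log u) ≤ 1 := by
  rcases eq_or_lt_of_le h0 with h | h
  · simp [← h]
  · have hlog : Real.log u⁻¹ ≤ u⁻¹ - 1 := Real.log_le_sub_one_of_pos (by positivity)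
    rw [Real.log_inv] at hlog
    have h2 : u * (-Real.log u) ≤ u * (u⁻¹ - 1) :=
      mul_le_mul_of_nonneg_left hlog h0
    have h3 : u * u⁻¹ = 1 := mul_inv_cancel₀ (ne_of_gt h)
    nlinarith

/-- The key one-sided estimate: the weighted cumulative residual entropy of `X` with the
reweighted weight `ψY` is at most the `φ`-weighted cumulative residual entropy of `X + Y`. -/
lemma wcre_aux {Ω : Type*} [MeasureSpace Ω] [IsProbabilityMeasure (ℙ : Measure Ω)]
    (X Y : Ω → ℝ) (hX : Measurable X) (hY : Measurable Y)
    (hXpos : ∀ ω, 0 ≤ X ω) (hYpos : ∀ ω, 0 ≤ Y ω)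
    (hindep : IndepFun X Y ℙ)
    (fY : ℝ → ℝ) (hfY : ∀ y, 0 ≤ fY y)
    (hfYpdf : Measure.map Y ℙ = volume.withDensity (fun y => ENNReal.ofReal (fY y)))
    (SX SXY : ℝ → ℝ)
    (hSX : ∀ x, SX x = (ℙ {ω | x < X ω}).toReal)
    (hSXY : ∀ w, SXY w = (ℙ {ω | w < X ω + Y ω}).toReal)
    (φ : ℝ → ℝ) (hφm : Measurable φ) (hφ : ∀ x, 0 ≤ φ x)
    (ψY : ℝ → ℝ) (hψY : ∀ x, ψY x = ∫ y, fY y * φ (x + y))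
    (hI1 : IntegrableOn (fun x => ψY x * SX x * Real.log (SX x)) (Ioi (0:ℝ)))
    (hI3 : IntegrableOn (fun w => φ w * SXY w * Real.log (SXY w)) (Ioi (0:ℝ))) :
    wcre ψY SX ≤ wcre φ SXY := by
  classical
  set μX := Measure.map X ℙ with hμX
  set μY := Measure.map Y ℙ with hμY
  haveI : IsProbabilityMeasure μX := Measure.isProbabilityMeasure_map hX.aemeasurable
  haveI : IsProbabilityMeasure μY := Measure.isProbabilityMeasure_map hY.aemeasurable
  -- basic facts about the survival functions
  have hSX' : ∀ t : ℝ, SX t = (μX (Ioi t)).toReal := by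
    intro t
    rw [hSX, hμX, Measure.map_apply hX measurableSet_Ioi]
    rfl
  have hSXanti : Antitone SX := by
    intro a b hab
    rw [hSX' a, hSX' b]
    exact ENNReal.toReal_mono (measure_ne_top _ _) (measure_mono (Ioi_subset_Ioi hab))
  have hSXmeas : Measurable SX := hSXanti.measurable
  have hSXYanti : Antitone SXY := by
    intro a b hab
    rw [hSXY a, hSXY b]
    refine ENNReal.toReal_mono (measure_ne_top _ _) (measure_mono ?_)
    intro ω hω
    exact lt_of_le_of_lt hab hω
  have hSXYmeas : Measurable SXY := hSXYanti.measurable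
  have hSX0 : ∀ t, 0 ≤ SX t := fun t => by rw [hSX]; exact ENNReal.toReal_nonneg
  have hSXY0 : ∀ t, 0 ≤ SXY t := fun t => by rw [hSXY]; exact ENNReal.toReal_nonneg
  have hSX1 : ∀ t, SX t ≤ 1 := by
    intro t
    rw [hSX]
    have := prob_le_one (μ := (ℙ : Measure Ω)) (s := {ω | t < X ω})
    simpa using ENNReal.toReal_mono ENNReal.one_ne_top this
  have hSXY1 : ∀ t, SXY t ≤ 1 := by
    intro t
    rw [hSXY]
    have := prob_le_one (μ := (ℙ : Measure Ω)) (s := {ω | t < X ω + Y ω})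
    simpa using ENNReal.toReal_mono ENNReal.one_ne_top this
  have hSXneg : ∀ t : ℝ, t < 0 → SX t = 1 := by
    intro t ht
    rw [hSX]
    have : {ω | t < X ω} = univ := by
      ext ω; simp only [mem_setOf_eq, mem_univ, iff_true]
      exact lt_of_lt_of_le ht (hXpos ω)
    rw [this, measure_univ, ENNReal.toReal_one]
  -- the nonnegative "entropy" integrands
  set g : ℝ → ℝ := fun x => -(SX x * Real.log (SX x)) with hg
  set gXY : ℝ → ℝ := fun w => -(SXY w * Real.log (SXY w)) with hgXY
  have hgm : Measurable g := (hSXmeas.mul (Real.measurable_log.comp hSXmeas)).neg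
  have hgXYm : Measurable gXY := (hSXYmeas.mul (Real.measurable_log.comp hSXYmeas)).neg
  have hg0 : ∀ x, 0 ≤ g x := by
    intro x
    have hlog : Real.log (SX x) ≤ 0 := Real.log_nonpos (hSX0 x) (hSX1 x)
    have : SX x * Real.log (SX x) ≤ 0 := mul_nonpos_of_nonneg_of_nonpos (hSX0 x) hlog
    simpa [hg] using neg_nonneg.2 this
  have hgXY0 : ∀ w, 0 ≤ gXY w := by
    intro w
    have hlog : Real.log (SXY w) ≤ 0 := Real.log_nonpos (hSXY0 w) (hSXY1 w)
    have : SXY w * Real.log (SXY w) ≤ 0 := mul_nonpos_of_nonneg_of_nonpos (hSXY0 w) hlog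
    simpa [hgXY] using neg_nonneg.2 this
  have hg1 : ∀ x, g x ≤ 1 := fun x => wcre_mul_log_bound (hSX0 x) (hSX1 x)
  have hgneg : ∀ t : ℝ, t < 0 → g t = 0 := by
    intro t ht
    simp [hg, hSXneg t ht]
  -- a.e. nonnegativity of Y under its law
  have hYae : ∀ᵐ y ∂μY, 0 ≤ y := by
    rw [ae_iff]
    have hset : {y : ℝ | ¬ 0 ≤ y} = Iio 0 := by ext y; simp [not_le]
    rw [hset, hμY, Measure.map_apply hY measurableSet_Iio]
    have : Y ⁻¹' Iio 0 = (∅ : Set Ω) := by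
      ext ω; simp only [mem_preimage, mem_Iio, mem_empty_iff_false, iff_false, not_lt]
      exact hYpos ω
    rw [this, measure_empty]
  -- product structure from independence
  have hmap : Measure.map (fun ω => (Y ω, X ω)) ℙ = μY.prod μX :=
    (indepFun_iff_map_prod_eq_prod_map_map hY.aemeasurable hX.aemeasurable).1 hindep.symm
  -- the survival function of the sum as an average of translated survival functions
  have hSXYint : ∀ w : ℝ, SXY w = ∫ y, SX (w - y) ∂μY := by
    intro w
    have hs : MeasurableSet {p : ℝ × ℝ | w < p.2 + p.1} :=
      measurableSet_lt measurable_const (measurable_snd.add measurable_fst)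
    have h1 : ℙ {ω | w < X ω + Y ω} = (μY.prod μX) {p : ℝ × ℝ | w < p.2 + p.1} := by
      rw [← hmap, Measure.map_apply (hY.prodMk hX) hs]
      rfl
    have h2 : (μY.prod μX) {p : ℝ × ℝ | w < p.2 + p.1} = ∫⁻ y, μX (Ioi (w - y)) ∂μY := by
      rw [Measure.prod_apply hs]
      refine lintegral_congr fun y => ?_
      congr 1
      ext x
      simp [sub_lt_iff_lt_add]
    have hmono : Monotone fun y : ℝ => μX (Ioi (w - y)) := by
      intro a b hab
      exact measure_mono (Ioi_subset_Ioi (by linarith))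
    rw [hSXY, h1, h2,
      ← integral_toReal hmono.measurable.aemeasurable (ae_of_all _ fun y => measure_lt_top _ _)]
    refine integral_congr_ae (ae_of_all _ fun y => ?_)
    exact (hSX' (w - y)).symm
  -- integrability of bounded measurable functions against μY
  have hSXint : ∀ w : ℝ, Integrable (fun y => SX (w - y)) μY := by
    intro w
    refine Integrable.mono' (integrable_const 1)
      ((hSXmeas.comp (measurable_const.sub measurable_id)).aestronglyMeasurable)
      (ae_of_all _ fun y => ?_)
    rw [Real.norm_eq_abs, abs_of_nonneg (hSX0 _)]
    exact hSX1 _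
  have hgint : ∀ w : ℝ, Integrable (fun y => g (w - y)) μY := by
    intro w
    refine Integrable.mono' (integrable_const 1)
      ((hgm.comp (measurable_const.sub measurable_id)).aestronglyMeasurable)
      (ae_of_all _ fun y => ?_)
    rw [Real.norm_eq_abs, abs_of_nonneg (hg0 _)]
    exact hg1 _
  -- Jensen's inequality pointwise in w
  have hJen : ∀ w : ℝ, ∫ y, g (w - y) ∂μY ≤ gXY w := by
    intro w
    have hconv : ConvexOn ℝ (Icc (0:ℝ) 1) (fun u => u * Real.log u) :=
      Real.convexOn_mul_log.subset Icc_subset_Ici_self (convex_Icc 0 1)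
    have hgi : Integrable ((fun u => u * Real.log u) ∘ fun y => SX (w - y)) μY := by
      have := (hgint w).neg
      refine this.congr (ae_of_all _ fun y => ?_)
      simp [hg, Function.comp]
    have hJ := hconv.map_integral_le (Real.continuous_mul_log.continuousOn) isClosed_Icc
      (ae_of_all _ fun y => ⟨hSX0 _, hSX1 _⟩) (hSXint w) hgi
    rw [← hSXYint w] at hJ
    have heq : ∫ y, g (w - y) ∂μY = -∫ y, SX (w - y) * Real.log (SX (w - y)) ∂μY := by
      rw [← integral_neg]
    rw [heq]
    simp only [hgXY]
    linarith [hJ]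
  -- rewrite both wcre's as toReal of lintegrals
  have hI3' : Integrable (fun w => φ w * gXY w) (volume.restrict (Ioi 0)) := by
    have := hI3.neg
    refine this.congr (ae_of_all _ fun w => ?_)
    simp [hgXY]; ring
  have hI1' : Integrable (fun x => ψY x * g x) (volume.restrict (Ioi 0)) := by
    have := hI1.neg
    refine this.congr (ae_of_all _ fun x => ?_)
    simp [hg]; ring
  have hψY0 : ∀ x, 0 ≤ ψY x := by
    intro x
    rw [hψY]
    exact integral_nonneg fun y => mul_nonneg (hfY y) (hφ _)
  set K : ℝ≥0∞ := ∫⁻ w in Ioi (0:ℝ), ENNReal.ofReal (φ w * gXY w) with hK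
  set I : ℝ≥0∞ := ∫⁻ x in Ioi (0:ℝ), ENNReal.ofReal (ψY x * g x) with hIdef
  have hwcreXY : wcre φ SXY = K.toReal := by
    rw [wcre, ← integral_neg]
    rw [show (fun w => -(φ w * SXY w * Real.log (SXY w))) = fun w => φ w * gXY w by
      funext w; simp [hgXY]; ring]
    rw [integral_eq_lintegral_of_nonneg_ae
      (ae_of_all _ fun w => mul_nonneg (hφ w) (hgXY0 w)) hI3'.aestronglyMeasurable]
  have hwcreX : wcre ψY SX = I.toReal := by
    rw [wcre, ← integral_neg]
    rw [show (fun x => -(ψY x * SX x * Real.log (SX x))) = fun x => ψY x * g x by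
      funext x; simp [hg]; ring]
    rw [integral_eq_lintegral_of_nonneg_ae
      (ae_of_all _ fun x => mul_nonneg (hψY0 x) (hg0 x)) hI1'.aestronglyMeasurable]
  have hKfin : K ≠ ⊤ := by
    have := (hasFiniteIntegral_iff_ofReal
      (ae_of_all _ fun w => mul_nonneg (hφ w) (hgXY0 w))).1 hI3'.hasFiniteIntegral
    exact this.ne
  -- THE CRUX: pointwise bound on ψY x in terms of the law of Y
  have hcrux : ∀ x : ℝ, ENNReal.ofReal (ψY x) ≤ ∫⁻ y, ENNReal.ofReal (φ (x + y)) ∂μY := by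
    intro x
    rw [hψY]
    set k : ℝ → ℝ≥0∞ := fun y => ENNReal.ofReal (φ (x + y)) with hk
    have hφxm : Measurable fun y : ℝ => φ (x + y) :=
      hφm.comp (measurable_const.add measurable_id)
    have hkm : Measurable k := hφxm.ennreal_ofReal
    by_cases hint : Integrable (fun y => fY y * φ (x + y)) volume
    · rw [integral_eq_lintegral_of_nonneg_ae
        (ae_of_all _ fun y => mul_nonneg (hfY y) (hφ _)) hint.aestronglyMeasurable]
      refine le_trans ENNReal.ofReal_toReal_le ?_
      set U : Set ℝ := {y | φ (x + y) ≠ 0} with hU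
      have hUm : MeasurableSet U := by
        have : U = (fun y : ℝ => φ (x + y)) ⁻¹' ({0}ᶜ) := by
          ext y; simp [hU]
        rw [this]
        exact hφxm (measurableSet_singleton (0:ℝ)).compl
      -- fY is a.e. measurable on U
      have he_ae : AEMeasurable (fun y => (fY y * φ (x + y)) * (φ (x + y))⁻¹) volume :=
        hint.aemeasurable.mul hφxm.inv.aemeasurable
      have hfY_aem : AEMeasurable (fun y => ENNReal.ofReal (fY y)) (volume.restrict U) := by
        refine (he_ae.restrict.ennreal_ofReal).congr ?_
        refine (ae_restrict_iff' hUm).2 (ae_of_all _ fun y hy => ?_)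
        show ENNReal.ofReal (fY y * φ (x + y) * (φ (x + y))⁻¹) = ENNReal.ofReal (fY y)
        rw [mul_inv_cancel_right₀ hy]
      -- Radon–Nikodym derivative of the law of Y
      set d : ℝ → ℝ≥0∞ := μY.rnDeriv volume with hdd
      have hd : Measurable d := Measure.measurable_rnDeriv μY volume
      have hac : μY ≪ volume := by
        rw [hfYpdf]
        exact withDensity_absolutelyContinuous _ _
      have hwd : volume.withDensity d = μY := Measure.withDensity_rnDeriv_eq μY volume hac
      have hsets : ∀ s : Set ℝ, MeasurableSet s →
          ∫⁻ y in s, ENNReal.ofReal (fY y) = ∫⁻ y in s, d y := by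
        intro s hs
        have h1 : μY s = ∫⁻ y in s, ENNReal.ofReal (fY y) := by
          rw [hfYpdf, withDensity_apply _ hs]
        have h2 : μY s = ∫⁻ y in s, d y := by
          rw [← hwd, withDensity_apply _ hs]
        rw [← h1, h2]
      have hdU : (fun y => ENNReal.ofReal (fY y)) =ᵐ[volume.restrict U] d := by
        refine ae_eq_of_forall_setLIntegral_eq_of_sigmaFinite₀ hfY_aem
          hd.aemeasurable.restrict (fun s hs _ => ?_)
        rw [Measure.restrict_restrict hs]
        exact hsets (s ∩ U) (hs.inter hUm)
      calc ∫⁻ y, ENNReal.ofReal (fY y * φ (x + y)) ∂volume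
          = ∫⁻ y, ENNReal.ofReal (fY y) * k y ∂volume := by
            refine lintegral_congr fun y => ?_
            rw [hk, ENNReal.ofReal_mul (hfY y)]
        _ = ∫⁻ y, U.indicator (fun y => ENNReal.ofReal (fY y) * k y) y ∂volume := by
            refine lintegral_congr fun y => ?_
            by_cases hy : y ∈ U
            · rw [indicator_of_mem hy]
            · rw [indicator_of_notMem hy]
              have hzero : φ (x + y) = 0 := by
                by_contra h
                exact hy h
              simp [hk, hzero]
        _ = ∫⁻ y in U, ENNReal.ofReal (fY y) * k y ∂volume := lintegral_indicator hUm _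
        _ = ∫⁻ y in U, d y * k y ∂volume :=
            lintegral_congr_ae (hdU.mul (Filter.EventuallyEq.refl _ _))
        _ ≤ ∫⁻ y, d y * k y ∂volume := setLIntegral_le_lintegral _ _
        _ = ∫⁻ y, k y ∂(volume.withDensity d) :=
            (lintegral_withDensity_eq_lintegral_mul volume hd hkm).symm
        _ = ∫⁻ y, k y ∂μY := by rw [hwd]
    · rw [integral_undef hint]
      simp
  -- main chain of (in)equalities between lintegrals
  have step1 : ∫⁻ w in Ioi (0:ℝ),
      (∫⁻ y, ENNReal.ofReal (φ w) * ENNReal.ofReal (g (w - y)) ∂μY) ≤ K := by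
    refine lintegral_mono fun w => ?_
    rw [lintegral_const_mul' _ _ ENNReal.ofReal_ne_top, ENNReal.ofReal_mul (hφ w)]
    refine mul_le_mul_right ?_ _
    rw [← ofReal_integral_eq_lintegral_ofReal (hgint w) (ae_of_all _ fun y => hg0 _)]
    exact ENNReal.ofReal_le_ofReal (hJen w)
  have hFm : Measurable fun p : ℝ × ℝ =>
      ENNReal.ofReal (φ p.1) * ENNReal.ofReal (g (p.1 - p.2)) :=
    ((hφm.comp measurable_fst).ennreal_ofReal).mul
      ((hgm.comp (measurable_fst.sub measurable_snd)).ennreal_ofReal)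
  have step2 : ∫⁻ w in Ioi (0:ℝ),
      (∫⁻ y, ENNReal.ofReal (φ w) * ENNReal.ofReal (g (w - y)) ∂μY) =
      ∫⁻ y, (∫⁻ w in Ioi (0:ℝ),
        ENNReal.ofReal (φ w) * ENNReal.ofReal (g (w - y))) ∂μY :=
    lintegral_lintegral_swap hFm.aemeasurable
  -- translate the inner integral
  have step3 : ∀ y : ℝ, 0 ≤ y →
      (∫⁻ w in Ioi (0:ℝ), ENNReal.ofReal (φ w) * ENNReal.ofReal (g (w - y))) =
      ∫⁻ x in Ioi (0:ℝ), ENNReal.ofReal (φ (x + y)) * ENNReal.ofReal (g x) := by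
    intro y hy
    have hind1 : Measurable fun w : ℝ =>
        (Ioi (0:ℝ)).indicator (fun w => ENNReal.ofReal (φ w) * ENNReal.ofReal (g (w - y))) w :=
      (((hφm.ennreal_ofReal).mul
        ((hgm.comp (measurable_id.sub measurable_const)).ennreal_ofReal))).indicator
        measurableSet_Ioi
    rw [← lintegral_indicator measurableSet_Ioi, ← lintegral_indicator measurableSet_Ioi]
    have htrans : ∫⁻ w, (Ioi (0:ℝ)).indicator
        (fun w => ENNReal.ofReal (φ w) * ENNReal.ofReal (g (w - y))) w ∂volume =
        ∫⁻ x, (Ioi (0:ℝ)).indicator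
        (fun w => ENNReal.ofReal (φ w) * ENNReal.ofReal (g (w - y))) (x + y) ∂volume := by
      conv_lhs => rw [← map_add_right_eq_self volume y]
      rw [lintegral_map hind1 (measurable_add_const y)]
    rw [htrans]
    refine lintegral_congr_ae ?_
    have h0 : ∀ᵐ x : ℝ, x ≠ 0 := by
      rw [ae_iff]
      have : {x : ℝ | ¬ x ≠ 0} = {0} := by ext x; simp
      rw [this]
      exact measure_singleton 0
    filter_upwards [h0] with x hx
    by_cases hx0 : 0 < x
    · have hxy : 0 < x + y := by linarith
      rw [indicator_of_mem (mem_Ioi.mpr hxy), indicator_of_mem (mem_Ioi.mpr hx0),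
        add_sub_cancel_right]
    · have hxneg : x < 0 := lt_of_le_of_ne (not_lt.1 hx0) hx
      have hRx : (Ioi (0:ℝ)).indicator
          (fun x => ENNReal.ofReal (φ (x + y)) * ENNReal.ofReal (g x)) x = 0 :=
        indicator_of_notMem (fun h => hx0 (mem_Ioi.mp h)) _
      rw [hRx]
      by_cases hxy : 0 < x + y
      · rw [indicator_of_mem (mem_Ioi.mpr hxy), add_sub_cancel_right, hgneg x hxneg]
        simp
      · rw [indicator_of_notMem (fun h => hxy (mem_Ioi.mp h))]
  have step3' : ∫⁻ y, (∫⁻ w in Ioi (0:ℝ),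
        ENNReal.ofReal (φ w) * ENNReal.ofReal (g (w - y))) ∂μY =
      ∫⁻ y, (∫⁻ x in Ioi (0:ℝ),
        ENNReal.ofReal (φ (x + y)) * ENNReal.ofReal (g x)) ∂μY := by
    refine lintegral_congr_ae ?_
    filter_upwards [hYae] with y hy
    exact step3 y hy
  have hGm : Measurable fun p : ℝ × ℝ =>
      ENNReal.ofReal (φ (p.2 + p.1)) * ENNReal.ofReal (g p.2) :=
    ((hφm.comp (measurable_snd.add measurable_fst)).ennreal_ofReal).mul
      ((hgm.comp measurable_snd).ennreal_ofReal)
  have step4 : ∫⁻ y, (∫⁻ x in Ioi (0:ℝ),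
        ENNReal.ofReal (φ (x + y)) * ENNReal.ofReal (g x)) ∂μY =
      ∫⁻ x in Ioi (0:ℝ), (∫⁻ y, ENNReal.ofReal (φ (x + y)) * ENNReal.ofReal (g x) ∂μY) := by
    exact lintegral_lintegral_swap hGm.aemeasurable
  have step5 : ∫⁻ x in Ioi (0:ℝ),
      (∫⁻ y, ENNReal.ofReal (φ (x + y)) * ENNReal.ofReal (g x) ∂μY) =
      ∫⁻ x in Ioi (0:ℝ),
      (∫⁻ y, ENNReal.ofReal (φ (x + y)) ∂μY) * ENNReal.ofReal (g x) := by
    refine lintegral_congr fun x => ?_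
    exact lintegral_mul_const' _ _ ENNReal.ofReal_ne_top
  have step6 : I ≤ ∫⁻ x in Ioi (0:ℝ),
      (∫⁻ y, ENNReal.ofReal (φ (x + y)) ∂μY) * ENNReal.ofReal (g x) := by
    rw [hIdef]
    refine lintegral_mono fun x => ?_
    rw [ENNReal.ofReal_mul (hψY0 x)]
    exact mul_le_mul_left (hcrux x) _
  have hmain : I ≤ K := by
    calc I ≤ ∫⁻ x in Ioi (0:ℝ),
        (∫⁻ y, ENNReal.ofReal (φ (x + y)) ∂μY) * ENNReal.ofReal (g x) := step6
      _ = ∫⁻ x in Ioi (0:ℝ),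
          (∫⁻ y, ENNReal.ofReal (φ (x + y)) * ENNReal.ofReal (g x) ∂μY) := step5.symm
      _ = ∫⁻ y, (∫⁻ x in Ioi (0:ℝ),
          ENNReal.ofReal (φ (x + y)) * ENNReal.ofReal (g x)) ∂μY := step4.symm
      _ = ∫⁻ y, (∫⁻ w in Ioi (0:ℝ),
          ENNReal.ofReal (φ w) * ENNReal.ofReal (g (w - y))) ∂μY := step3'.symm
      _ = ∫⁻ w in Ioi (0:ℝ),
          (∫⁻ y, ENNReal.ofReal (φ w) * ENNReal.ofReal (g (w - y)) ∂μY) := step2.symm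
      _ ≤ K := step1
  rw [hwcreX, hwcreXY]
  exact ENNReal.toReal_mono hKfin hmain

theorem wcre_sum_of_indep_ge
    {Ω : Type*} [MeasureSpace Ω] [IsProbabilityMeasure (ℙ : Measure Ω)]
    (X Y : Ω → ℝ) (hX : Measurable X) (hY : Measurable Y)
    (hXpos : ∀ ω, 0 ≤ X ω) (hYpos : ∀ ω, 0 ≤ Y ω)
    (hindep : IndepFun X Y ℙ)
    (fX fY : ℝ → ℝ) (hfX : ∀ x, 0 ≤ fX x) (hfY : ∀ y, 0 ≤ fY y)
    (hfXpdf : Measure.map X ℙ = volume.withDensity (fun x => ENNReal.ofReal (fX x)))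
    (hfYpdf : Measure.map Y ℙ = volume.withDensity (fun y => ENNReal.ofReal (fY y)))
    (SX SY SXY : ℝ → ℝ)
    (hSX : ∀ x, SX x = (ℙ {ω | x < X ω}).toReal)
    (hSY : ∀ y, SY y = (ℙ {ω | y < Y ω}).toReal)
    (hSXY : ∀ w, SXY w = (ℙ {ω | w < X ω + Y ω}).toReal)
    (φ : ℝ → ℝ) (hφm : Measurable φ) (hφ : ∀ x, 0 ≤ φ x)
    (ψY ψX : ℝ → ℝ)
    (hψY : ∀ x, ψY x = ∫ y, fY y * φ (x + y))
    (hψX : ∀ y, ψX y = ∫ x, fX x * φ (y + x))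
    (hI1 : IntegrableOn (fun x => ψY x * SX x * Real.log (SX x)) (Ioi (0:ℝ)))
    (hI2 : IntegrableOn (fun y => ψX y * SY y * Real.log (SY y)) (Ioi (0:ℝ)))
    (hI3 : IntegrableOn (fun w => φ w * SXY w * Real.log (SXY w)) (Ioi (0:ℝ))) :
    max (wcre ψY SX) (wcre ψX SY) ≤ wcre φ SXY := by
  have hSXY' : ∀ w, SXY w = (ℙ {ω | w < Y ω + X ω}).toReal := by
    intro w
    rw [hSXY w]
    congr 2
    ext ω
    simp [add_comm]
  refine max_le ?_ ?_
  · exact wcre_aux X Y hX hY hXpos hYpos hindep fY hfY hfYpdf SX SXY hSX hSXY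
      φ hφm hφ ψY hψY hI1 hI3
  · exact wcre_aux Y X hY hX hYpos hXpos hindep.symm fX hfX hfXpdf SY SXY hSY hSXY'
      φ hφm hφ ψX hψX hI2 hI3
end

section
/- Let X and Y be i.i.d. nonnegative random variables with survival function F̄, φ ≥ 0 a weight, and ψ(x) = ∫₀ˣ φ(t) dt. Then 2 E_φ^w(X) ≥ E[|ψ(X) − ψ(Y)|], and consequently 2 E_φ^w(X) ≥ E[|ψ(X) − E[ψ(X)]|]. -/
/-!
For `a ≤ b`, `|ψ b - ψ a|` is at most the `φ`-mass of `[a, b)`, so by Tonelli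
`E|ψ(X) - ψ(Y)| ≤ ∫ φ(t) P(min(X,Y) ≤ t < max(X,Y)) dt`. For i.i.d. `X, Y` the event means that
exactly one of them exceeds `t`, which has probability `2 F̄(t)(1 - F̄(t))`, and
`u(1 - u) ≤ u|log u|` bounds the result by `2 E_φ^w(X)`. The second inequality follows from the
first: `|z - E ψ(Y)| ≤ E|z - ψ(Y)|`, integrated against the law of `ψ(X)`, gives
`E|ψ(X) - E ψ(X)| ≤ E|ψ(X) - ψ(Y)|` by independence.
-/

open MeasureTheory ProbabilityTheory Set
open scoped ENNReal

lemma mul_one_sub_le_mul_abs_log {u : ℝ} (h0 : 0 ≤ u) (h1 : u ≤ 1) :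
    u * (1 - u) ≤ u * |Real.log u| := by
  rcases h0.eq_or_lt with rfl | hpos
  · simp
  rw [abs_of_nonpos (Real.log_nonpos h0 h1)]
  exact mul_le_mul_of_nonneg_left (by linarith [Real.log_le_sub_one_of_pos hpos]) h0

lemma lintegral_mul_one_sub_le_integral_mul_abs_log {α : Type*} [MeasurableSpace α]
    {μ : Measure α} {φ F : α → ℝ} (hφ : ∀ t, 0 ≤ φ t) (hF0 : ∀ t, 0 ≤ F t) (hF1 : ∀ t, F t ≤ 1)
    (hint : Integrable (fun t => φ t * F t * |Real.log (F t)|) μ) :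
    ∫⁻ t, ‖φ t‖ₑ * ENNReal.ofReal (2 * F t * (1 - F t)) ∂μ ≤
      ENNReal.ofReal (2 * ∫ t, φ t * F t * |Real.log (F t)| ∂μ) := by
  have hnonneg : ∀ t, 0 ≤ 2 * (φ t * F t * |Real.log (F t)|) := fun t =>
    mul_nonneg zero_le_two (mul_nonneg (mul_nonneg (hφ t) (hF0 t)) (abs_nonneg _))
  rw [← integral_const_mul, ofReal_integral_eq_lintegral_ofReal (hint.const_mul 2)
    (ae_of_all _ hnonneg)]
  refine lintegral_mono fun t => ?_
  rw [Real.enorm_eq_ofReal (hφ t), ← ENNReal.ofReal_mul (hφ t)]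
  apply ENNReal.ofReal_le_ofReal
  nlinarith [mul_le_mul_of_nonneg_left (mul_one_sub_le_mul_abs_log (hF0 t) (hF1 t)) (hφ t)]

section Primitive

variable {E : Type*} [NormedAddCommGroup E] [NormedSpace ℝ E] {f : ℝ → E}

lemma stronglyMeasurable_primitive (hf : StronglyMeasurable f) (c : ℝ) :
    StronglyMeasurable fun x => ∫ t in c..x, f t := by
  have hIoc : ∀ a b : ℝ → ℝ, Measurable a → Measurable b →
      StronglyMeasurable fun x => ∫ t in Ioc (a x) (b x), f t := by
    intro a b ha hb
    have hS : MeasurableSet {p : ℝ × ℝ | a p.1 < p.2 ∧ p.2 ≤ b p.1} :=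
      (measurableSet_lt (ha.comp measurable_fst) measurable_snd).inter
        (measurableSet_le measurable_snd (hb.comp measurable_fst))
    have := ((hf.comp_measurable measurable_snd).indicator hS).integral_prod_right'
      (ν := (volume : Measure ℝ))
    convert this using 2 with x
    rw [← integral_indicator measurableSet_Ioc]
    rfl
  exact (hIoc _ _ measurable_const measurable_id).sub (hIoc _ _ measurable_id measurable_const)

lemma enorm_intervalIntegral_sub_le_setLIntegral_Ico (hf : AEStronglyMeasurable f)
    {a b : ℝ} (hab : a ≤ b) (c : ℝ) :
    ‖(∫ t in c..b, f t) - ∫ t in c..a, f t‖ₑ ≤ ∫⁻ t in Ico a b, ‖f t‖ₑ := by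
  rw [Measure.restrict_congr_set Ico_ae_eq_Ioc]
  by_cases hint : IntegrableOn f (Ioc a b)
  · have hab' : IntervalIntegrable f volume a b :=
      (intervalIntegrable_iff_integrableOn_Ioc_of_le hab).2 hint
    by_cases hca : IntervalIntegrable f volume c a
    · rw [intervalIntegral.integral_interval_sub_left (hca.trans hab') hca,
        intervalIntegral.integral_of_le hab]
      exact enorm_integral_le_lintegral_enorm _
    -- both primitives then take the junk value `0`
    · have hcb : ¬ IntervalIntegrable f volume c b := fun hcb => hca (hcb.trans hab'.symm)
      simp [intervalIntegral.integral_undef hca, intervalIntegral.integral_undef hcb]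
  · have : ∫⁻ t in Ioc a b, ‖f t‖ₑ = ∞ := by
      by_contra hfin
      exact hint ⟨hf.restrict, lt_top_iff_ne_top.2 hfin⟩
    simp [this]

end Primitive

lemma lintegral_setLIntegral_Ico {Ω : Type*} [MeasurableSpace Ω] {μ : Measure Ω} [SFinite μ]
    {ν : Measure ℝ} [SFinite ν] {U V : Ω → ℝ} (hU : Measurable U) (hV : Measurable V)
    {g : ℝ → ℝ≥0∞} (hg : Measurable g) :
    ∫⁻ ω, ∫⁻ t in Ico (U ω) (V ω), g t ∂ν ∂μ = ∫⁻ t, g t * μ {ω | U ω ≤ t ∧ t < V ω} ∂ν := by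
  set S := {p : Ω × ℝ | U p.1 ≤ p.2 ∧ p.2 < V p.1}
  have hS : MeasurableSet S :=
    (measurableSet_le (hU.comp measurable_fst) measurable_snd).inter
      (measurableSet_lt measurable_snd (hV.comp measurable_fst))
  calc ∫⁻ ω, ∫⁻ t in Ico (U ω) (V ω), g t ∂ν ∂μ
      = ∫⁻ ω, ∫⁻ t, S.indicator (g ∘ Prod.snd) (ω, t) ∂ν ∂μ := by
        refine lintegral_congr fun ω => ?_
        rw [← lintegral_indicator measurableSet_Ico]
        rfl
    _ = ∫⁻ t, ∫⁻ ω, S.indicator (g ∘ Prod.snd) (ω, t) ∂μ ∂ν :=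
        lintegral_lintegral_swap ((hg.comp measurable_snd).indicator hS).aemeasurable
    _ = ∫⁻ t, g t * μ {ω | U ω ≤ t ∧ t < V ω} ∂ν := by
        refine lintegral_congr fun t => ?_
        have hSt : MeasurableSet {ω | U ω ≤ t ∧ t < V ω} :=
          (measurableSet_le hU measurable_const).inter (measurableSet_lt measurable_const hV)
        rw [← setLIntegral_const, ← lintegral_indicator hSt]
        rfl

section Probability

variable {Ω : Type*} [MeasurableSpace Ω] {μ : Measure Ω} [IsProbabilityMeasure μ]

lemma measureReal_min_le_lt_max {X Y : Ω → ℝ} (hX : Measurable X) (hY : Measurable Y)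
    (hindep : IndepFun X Y μ) (hident : μ.map X = μ.map Y) (t : ℝ) :
    μ.real {ω | min (X ω) (Y ω) ≤ t ∧ t < max (X ω) (Y ω)} =
      2 * μ.real {ω | t < X ω} * (1 - μ.real {ω | t < X ω}) := by
  set A := X ⁻¹' Ioi t
  set B := Y ⁻¹' Ioi t
  have hA : MeasurableSet A := hX measurableSet_Ioi
  have hB : MeasurableSet B := hY measurableSet_Ioi
  have hBA : μ.real B = μ.real A := by
    simp only [A, B, measureReal_def, ← Measure.map_apply hX measurableSet_Ioi,
      ← Measure.map_apply hY measurableSet_Ioi, hident]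
  have hAB : μ.real (A ∩ B) = μ.real A * μ.real B := by
    simp only [measureReal_def, ← ENNReal.toReal_mul]
    exact congrArg ENNReal.toReal
      (hindep.measure_inter_preimage_eq_mul _ _ measurableSet_Ioi measurableSet_Ioi)
  have hE : {ω | min (X ω) (Y ω) ≤ t ∧ t < max (X ω) (Y ω)} = (A ∪ B) \ (A ∩ B) := by
    ext ω
    simp only [A, B, mem_ofPred_eq, min_le_iff, lt_max_iff, mem_sdiff, mem_union, mem_inter_iff,
      mem_preimage, mem_Ioi]
    grind
  have hunion := measureReal_union_add_inter (μ := μ) (s := A) hB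
  rw [hE, measureReal_sdiff (inter_subset_left.trans subset_union_left) (hA.inter hB)]
  change _ = 2 * μ.real A * (1 - μ.real A)
  rw [hBA] at hAB hunion
  linear_combination hunion - 2 * hAB

lemma lintegral_enorm_primitive_sub_le {E : Type*} [NormedAddCommGroup E] [NormedSpace ℝ E]
    {X Y : Ω → ℝ} (hX : Measurable X) (hY : Measurable Y) (hX0 : ∀ ω, 0 ≤ X ω)
    (hY0 : ∀ ω, 0 ≤ Y ω) (hindep : IndepFun X Y μ) (hident : μ.map X = μ.map Y)
    {φ : ℝ → E} (hφ : StronglyMeasurable φ) :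
    ∫⁻ ω, ‖(∫ t in (0:ℝ)..X ω, φ t) - ∫ t in (0:ℝ)..Y ω, φ t‖ₑ ∂μ ≤
      ∫⁻ t in Ioi 0, ‖φ t‖ₑ *
        ENNReal.ofReal (2 * μ.real {ω | t < X ω} * (1 - μ.real {ω | t < X ω})) := by
  have hpt : ∀ ω, ‖(∫ t in (0:ℝ)..X ω, φ t) - ∫ t in (0:ℝ)..Y ω, φ t‖ₑ ≤
      ∫⁻ t in Ico (min (X ω) (Y ω)) (max (X ω) (Y ω)), ‖φ t‖ₑ ∂(volume.restrict (Ici 0)) := by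
    intro ω
    rw [Measure.restrict_restrict measurableSet_Ico, inter_eq_left.2
      (Ico_subset_Ici_self.trans (Ici_subset_Ici.2 (le_min (hX0 ω) (hY0 ω))))]
    rcases le_total (X ω) (Y ω) with h | h
    · rw [min_eq_left h, max_eq_right h, enorm_sub_rev]
      exact enorm_intervalIntegral_sub_le_setLIntegral_Ico hφ.aestronglyMeasurable h 0
    · rw [min_eq_right h, max_eq_left h]
      exact enorm_intervalIntegral_sub_le_setLIntegral_Ico hφ.aestronglyMeasurable h 0
  calc _ ≤ ∫⁻ ω, ∫⁻ t in Ico (min (X ω) (Y ω)) (max (X ω) (Y ω)), ‖φ t‖ₑ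
          ∂(volume.restrict (Ici 0)) ∂μ := lintegral_mono hpt
    _ = ∫⁻ t in Ici 0, ‖φ t‖ₑ * μ {ω | min (X ω) (Y ω) ≤ t ∧ t < max (X ω) (Y ω)} :=
        lintegral_setLIntegral_Ico (hX.min hY) (hX.max hY) hφ.enorm
    _ = _ := by
        rw [Measure.restrict_congr_set Ioi_ae_eq_Ici]
        refine lintegral_congr fun t => ?_
        rw [← measureReal_min_le_lt_max hX hY hindep hident, ofReal_measureReal]

lemma integral_abs_sub_integral_le_of_indepFun {Z W : Ω → ℝ} (hZ : AEMeasurable Z μ)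
    (hW : AEMeasurable W μ) (hindep : IndepFun Z W μ) (hWint : Integrable W μ)
    (hZW : Integrable (fun ω => |Z ω - W ω|) μ) :
    ∫ ω, |Z ω - ∫ ω', W ω' ∂μ| ∂μ ≤ ∫ ω, |Z ω - W ω| ∂μ := by
  have hprod : μ.map (fun ω => (Z ω, W ω)) = (μ.map Z).prod (μ.map W) :=
    (indepFun_iff_map_prod_eq_prod_map_map hZ hW).1 hindep
  have hdist : AEStronglyMeasurable (fun p : ℝ × ℝ => |p.1 - p.2|) ((μ.map Z).prod (μ.map W)) :=
    (by fun_prop : Continuous fun p : ℝ × ℝ => |p.1 - p.2|).aestronglyMeasurable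
  have hF : Integrable (fun p : ℝ × ℝ => |p.1 - p.2|) ((μ.map Z).prod (μ.map W)) := by
    rw [← hprod] at hdist ⊢
    exact (integrable_map_measure hdist (hZ.prodMk hW)).2 hZW
  have hpt : ∀ z : ℝ, |z - ∫ w, w ∂μ.map W| ≤ ∫ w, |z - w| ∂μ.map W := by
    intro z
    have : IsProbabilityMeasure (μ.map W) := Measure.isProbabilityMeasure_map hW
    have hW' : Integrable (fun w => w) (μ.map W) :=
      (integrable_map_measure aestronglyMeasurable_id hW).2 hWint
    have hmean : z - ∫ w, w ∂μ.map W = ∫ w, (z - w) ∂μ.map W := by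
      rw [integral_sub (integrable_const z) hW', integral_const, probReal_univ, one_smul]
    rw [hmean]
    exact abs_integral_le_integral_abs
  calc ∫ ω, |Z ω - ∫ ω', W ω' ∂μ| ∂μ = ∫ z, |z - ∫ w, w ∂μ.map W| ∂μ.map Z := by
        rw [integral_map (f := fun w => w) hW aestronglyMeasurable_id, integral_map hZ
          (by fun_prop : Continuous fun z : ℝ => |z - ∫ ω', W ω' ∂μ|).aestronglyMeasurable]
    _ ≤ ∫ z, ∫ w, |z - w| ∂μ.map W ∂μ.map Z :=
        integral_mono_of_nonneg (ae_of_all _ fun _ => abs_nonneg _) hF.integral_prod_left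
          (ae_of_all _ hpt)
    _ = ∫ p, |p.1 - p.2| ∂(μ.map Z).prod (μ.map W) := integral_integral hF
    _ = ∫ ω, |Z ω - W ω| ∂μ := by
        rw [← hprod] at hdist ⊢
        exact integral_map (hZ.prodMk hW) hdist

end Probability

theorem two_wcre_ge_mean_abs_diff
    {Ω : Type*} [MeasureSpace Ω] [IsProbabilityMeasure (ℙ : Measure Ω)]
    (X Y : Ω → ℝ) (hX : Measurable X) (hY : Measurable Y)
    (hXpos : ∀ ω, 0 ≤ X ω) (hYpos : ∀ ω, 0 ≤ Y ω)
    (hindep : IndepFun X Y ℙ)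
    (hident : Measure.map X ℙ = Measure.map Y ℙ)
    (Fbar : ℝ → ℝ) (hFbar : ∀ x, Fbar x = (ℙ {ω | x < X ω}).toReal)
    (φ : ℝ → ℝ) (hφm : Measurable φ) (hφ : ∀ x, 0 ≤ φ x)
    (ψ : ℝ → ℝ) (hψ : ∀ x, ψ x = ∫ t in (0:ℝ)..x, φ t)
    (hwcre : IntegrableOn (fun x => φ x * Fbar x * |Real.log (Fbar x)|) (Ioi (0:ℝ)))
    (hI1 : Integrable (fun ω => |ψ (X ω) - ψ (Y ω)|) ℙ)
    (hI2 : Integrable (fun ω => ψ (X ω)) ℙ) :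
    (∫ ω, |ψ (X ω) - ψ (Y ω)| ∂(ℙ : Measure Ω))
        ≤ 2 * ∫ x in Ioi (0:ℝ), φ x * Fbar x * |Real.log (Fbar x)| ∧
    (∫ ω, |ψ (X ω) - ∫ ω', ψ (X ω') ∂(ℙ : Measure Ω)| ∂(ℙ : Measure Ω))
        ≤ 2 * ∫ x in Ioi (0:ℝ), φ x * Fbar x * |Real.log (Fbar x)| := by
  have hFbar' : ∀ t, (ℙ : Measure Ω).real {ω | t < X ω} = Fbar t := fun t => (hFbar t).symm
  have hF0 : ∀ t, 0 ≤ Fbar t := fun t => hFbar' t ▸ measureReal_nonneg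
  have hlint : ∫⁻ ω, ENNReal.ofReal |ψ (X ω) - ψ (Y ω)| ≤
      ENNReal.ofReal (2 * ∫ x in Ioi (0:ℝ), φ x * Fbar x * |Real.log (Fbar x)|) := by
    simp only [hψ, ← Real.enorm_eq_ofReal_abs]
    refine le_trans ?_ (lintegral_mul_one_sub_le_integral_mul_abs_log hφ hF0
      (fun t => hFbar' t ▸ measureReal_le_one) hwcre)
    simpa only [hFbar'] using
      lintegral_enorm_primitive_sub_le hX hY hXpos hYpos hindep hident hφm.stronglyMeasurable
  have part1 : (∫ ω, |ψ (X ω) - ψ (Y ω)|) ≤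
      2 * ∫ x in Ioi (0:ℝ), φ x * Fbar x * |Real.log (Fbar x)| := by
    rw [integral_eq_lintegral_of_nonneg_ae (ae_of_all _ fun ω => abs_nonneg _)
      hI1.aestronglyMeasurable]
    refine ENNReal.toReal_le_of_le_ofReal (mul_nonneg zero_le_two ?_) hlint
    exact setIntegral_nonneg measurableSet_Ioi fun t _ =>
      mul_nonneg (mul_nonneg (hφ t) (hF0 t)) (abs_nonneg _)
  refine ⟨part1, le_trans ?_ part1⟩
  have hψm : Measurable ψ :=
    funext hψ ▸ (stronglyMeasurable_primitive hφm.stronglyMeasurable 0).measurable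
  have hiid : IdentDistrib (ψ ∘ X) (ψ ∘ Y) ℙ ℙ :=
    (IdentDistrib.mk hX.aemeasurable hY.aemeasurable hident).comp hψm
  rw [show ∫ ω, ψ (X ω) = ∫ ω, ψ (Y ω) from hiid.integral_eq]
  exact integral_abs_sub_integral_le_of_indepFun (hψm.comp hX).aemeasurable
    (hψm.comp hY).aemeasurable (hindep.comp hψm hψm) (hiid.integrable_snd hI2) hI1
end
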